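/- Let r ≥ 3 be an odd integer and q = exp(iπ/r). Define the 6j-symbol value at all colors zero as T_r = (−1)^{r−1} Σ_{z=0}^{(r−1)/2} [ (r−1)/2 choose z ]_q · [ (r−1)/2 + z choose (r−1)/2 ]_q² · [ r−1−z choose (r−1)/2 ]_q, where [a choose b]_q = {a}!/({b}!{a−b}!). Then T_r = r² · Σ_{z=0}^{(r−1)/2} ( {z}! · {(r−1)/2 − z}! )^{−4}. -/

import Mathlib

/-- `q^x = exp(xiπ/r)`. -/
noncomputable def qexp (r : ℕ) (x : ℂ) : ℂ := Complex.exp (x * Real.pi * Complex.I / r)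

/-- `{x} = q^x - q^{-x}`. -/
noncomputable def qn (r : ℕ) (x : ℂ) : ℂ := qexp r x - qexp r (-x)

/-- The quantum factorial `{k}! = {1}{2}⋯{k}`, with `{0}! = 1`. -/
noncomputable def qfact (r : ℕ) (k : ℕ) : ℂ := ∏ j ∈ Finset.range k, qn r ((j : ℂ) + 1)

/-- The quantum binomial `[a choose b]_q = {a}!/({b}!{a-b}!)`. -/
noncomputable def qbinN (r : ℕ) (a b : ℕ) : ℂ := qfact r a / (qfact r b * qfact r (a - b))

/-!
Put `m = (r - 1) / 2`. The reflection `{r - j} = {j}` gives `{a}! {r-1-a}! = {r-1}!`, and with it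
all three kinds of `q`-binomials in the summand become `[m choose z]`, so the summand is
`({m}! / ({z}! {m-z}!))⁴`. Finally `{j}² = -(1 - ζ^j)(1 - ζ^{-j})` for the primitive `r`-th root
of unity `ζ = q²`, and `∏_{k=1}^{r-1} (1 - ζ^k) = r` gives `({r-1}!)² = r²`, hence `({m}!)⁴ = r²`.
-/

open Finset

/-- `q²`, a primitive `r`-th root of unity. -/
noncomputable abbrev zeta (r : ℕ) : ℂ := Complex.exp (2 * Real.pi * Complex.I / r)

lemma qexp_neg (r : ℕ) (x : ℂ) : qexp r (-x) = (qexp r x)⁻¹ := by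
  rw [qexp, qexp, ← Complex.exp_neg]
  ring_nf

lemma qexp_natCast_sq (r j : ℕ) : qexp r j ^ 2 = zeta r ^ j := by
  rw [qexp, zeta, ← Complex.exp_nat_mul, ← Complex.exp_nat_mul]
  ring_nf

lemma qn_natCast_sq (r j : ℕ) :
    qn r j ^ 2 = -((1 - zeta r ^ j) * (1 - (zeta r)⁻¹ ^ j)) := by
  have hq : qexp r j ≠ 0 := Complex.exp_ne_zero _
  rw [qn, qexp_neg, inv_pow, ← qexp_natCast_sq]
  field_simp
  ring

lemma qn_natCast_ne_zero {r j : ℕ} (hj₀ : j ≠ 0) (hjr : j < r) : qn r j ≠ 0 := by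
  have hζ : IsPrimitiveRoot (zeta r) r := Complex.isPrimitiveRoot_exp r (by omega)
  rw [← pow_ne_zero_iff two_ne_zero, qn_natCast_sq, neg_ne_zero]
  exact mul_ne_zero (sub_ne_zero.mpr (hζ.pow_ne_one_of_pos_of_lt hj₀ hjr).symm)
    (sub_ne_zero.mpr (hζ.inv.pow_ne_one_of_pos_of_lt hj₀ hjr).symm)

lemma qn_natCast_sub {r : ℕ} (hr : r ≠ 0) (x : ℂ) : qn r (r - x) = qn r x := by
  have hrC : (r : ℂ) ≠ 0 := Nat.cast_ne_zero.mpr hr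
  have hshift : ∀ y : ℂ, qexp r (r + y) = -qexp r y := by
    intro y
    rw [qexp, qexp, show ((r : ℂ) + y) * Real.pi * Complex.I / r
      = Real.pi * Complex.I + y * Real.pi * Complex.I / r by field_simp,
      Complex.exp_add, Complex.exp_pi_mul_I, neg_one_mul]
  have h : qexp r (r - x) = -qexp r (-x) := by rw [sub_eq_add_neg, hshift]
  rw [qn, qn, qexp_neg r (r - x), h, qexp_neg r x, inv_neg, inv_inv]
  ring

lemma qfact_ne_zero {r k : ℕ} (hk : k < r) : qfact r k ≠ 0 :=
  prod_ne_zero_iff.mpr fun j hj => by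
    simpa using qn_natCast_ne_zero (r := r) (j := j + 1) (by omega) (by simp at hj; omega)

lemma qfact_mul_qfact {r a b : ℕ} (h : a + b + 1 = r) :
    qfact r a * qfact r b = qfact r (r - 1) := by
  have hr : r ≠ 0 := by omega
  have hreflect : ∀ j ∈ range b, qn r ((a + j : ℕ) + 1) = qn r ((b - 1 - j : ℕ) + 1) := by
    intro j hj
    have hj : j < b := mem_range.mp hj
    rw [← qn_natCast_sub hr (((b - 1 - j : ℕ) : ℂ) + 1)]
    congr 1
    rw [← h, Nat.cast_sub (by omega)]
    push_cast [Nat.cast_sub (show 1 ≤ b by omega)]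
    ring
  rw [show r - 1 = a + b by omega, qfact, qfact, qfact, prod_range_add,
    prod_congr rfl hreflect, prod_range_reflect (fun j => qn r ((j : ℂ) + 1))]

lemma qfact_sq {r : ℕ} (hr : r ≠ 0) : qfact r (r - 1) ^ 2 = (-1) ^ (r - 1) * (r : ℂ) ^ 2 := by
  obtain ⟨n, rfl⟩ := Nat.exists_eq_add_one_of_ne_zero hr
  have hζ : IsPrimitiveRoot (zeta (n + 1)) (n + 1) := Complex.isPrimitiveRoot_exp _ hr
  have hsq : ∀ j ∈ range n, qn (n + 1) ((j : ℂ) + 1) ^ 2 =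
      -1 * (1 - zeta (n + 1) ^ (j + 1)) * (1 - (zeta (n + 1))⁻¹ ^ (j + 1)) := by
    intro j _
    rw [← Nat.cast_succ, qn_natCast_sq, Nat.succ_eq_add_one]
    ring
  rw [Nat.add_sub_cancel, qfact, ← prod_pow, prod_congr rfl hsq, prod_mul_distrib,
    prod_mul_distrib, prod_const, card_range, hζ.prod_one_sub_pow_eq_order,
    hζ.inv.prod_one_sub_pow_eq_order]
  push_cast
  ring

lemma qbinN_symm (r : ℕ) {a b : ℕ} (hb : b ≤ a) : qbinN r a (a - b) = qbinN r a b := by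
  rw [qbinN, qbinN, Nat.sub_sub_self hb, mul_comm]

lemma qbinN_reflect {r a b : ℕ} (hba : b ≤ a) (har : a < r) :
    qbinN r (r - 1 - b) (r - 1 - a) = qbinN r a b := by
  have hC : qfact r (r - 1) ≠ 0 := qfact_ne_zero (by omega)
  have ha : qfact r a ≠ 0 := qfact_ne_zero har
  have hb : qfact r b ≠ 0 := qfact_ne_zero (by omega)
  have hrb : qfact r (r - 1 - b) = qfact r (r - 1) / qfact r b := by
    rw [eq_div_iff hb, mul_comm, qfact_mul_qfact (by omega)]
  have hra : qfact r (r - 1 - a) = qfact r (r - 1) / qfact r a := by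
    rw [eq_div_iff ha, mul_comm, qfact_mul_qfact (by omega)]
  rw [qbinN, qbinN, hrb, hra, show r - 1 - b - (r - 1 - a) = a - b by omega]
  field_simp

lemma qbinN_add_middle {r m z : ℕ} (hm : 2 * m + 1 = r) (hz : z ≤ m) :
    qbinN r (m + z) m = qbinN r m z := by
  rw [← qbinN_reflect (le_add_right le_rfl) (by omega), show r - 1 - m = m by omega,
    show r - 1 - (m + z) = m - z by omega, qbinN_symm r hz]

lemma qbinN_sub_middle {r m z : ℕ} (hm : 2 * m + 1 = r) (hz : z ≤ m) :
    qbinN r (r - 1 - z) m = qbinN r m z := by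
  rw [← qbinN_reflect hz (by omega), show r - 1 - m = m by omega]

lemma qfact_middle_pow_four {r m : ℕ} (hm : 2 * m + 1 = r) : qfact r m ^ 4 = (r : ℂ) ^ 2 := by
  rw [show qfact r m ^ 4 = (qfact r m * qfact r m) ^ 2 by ring, qfact_mul_qfact (by omega),
    qfact_sq (by omega), (show Even (r - 1) from ⟨m, by omega⟩).neg_one_pow, one_mul]

lemma sixj_summand_eq {r m z : ℕ} (hm : 2 * m + 1 = r) (hz : z ≤ m) :
    qbinN r m z * qbinN r (m + z) m ^ 2 * qbinN r (r - 1 - z) m =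
      (r : ℂ) ^ 2 * ((qfact r z * qfact r (m - z)) ^ 4)⁻¹ := by
  rw [qbinN_add_middle hm hz, qbinN_sub_middle hm hz, ← qfact_middle_pow_four hm, qbinN]
  ring

theorem stmt9_general (r : ℕ) (hodd : Odd r) :
    (-1 : ℂ) ^ (r - 1) *
        ∑ z ∈ Finset.range ((r - 1) / 2 + 1),
          qbinN r ((r - 1) / 2) z * (qbinN r ((r - 1) / 2 + z) ((r - 1) / 2)) ^ 2 *
            qbinN r (r - 1 - z) ((r - 1) / 2) =
      (r : ℂ) ^ 2 *
        ∑ z ∈ Finset.range ((r - 1) / 2 + 1),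
          ((qfact r z * qfact r ((r - 1) / 2 - z)) ^ 4)⁻¹ := by
  obtain ⟨m, hm⟩ := hodd
  have hhalf : (r - 1) / 2 = m := by omega
  rw [hhalf, (show Even (r - 1) from ⟨m, by omega⟩).neg_one_pow, one_mul, mul_sum]
  exact sum_congr rfl fun z hz => sixj_summand_eq hm.symm (Nat.lt_succ_iff.mp (mem_range.mp hz))

/-- For odd `r`, the all-zero-colors `6j`-symbol
`T_r = (-1)^{r-1} Σ_z [m choose z][m+z choose m]²[r-1-z choose m]` (with `m = (r-1)/2`)
equals `r² Σ_z ({z}!{m-z}!)^{-4}`. -/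
theorem stmt9 (r : ℕ) (hr : 3 ≤ r) (hodd : Odd r) :
    (-1 : ℂ) ^ (r - 1) *
        ∑ z ∈ Finset.range ((r - 1) / 2 + 1),
          qbinN r ((r - 1) / 2) z * (qbinN r ((r - 1) / 2 + z) ((r - 1) / 2)) ^ 2 *
            qbinN r (r - 1 - z) ((r - 1) / 2) =
      (r : ℂ) ^ 2 *
        ∑ z ∈ Finset.range ((r - 1) / 2 + 1),
          ((qfact r z * qfact r ((r - 1) / 2 - z)) ^ 4)⁻¹ :=
  stmt9_general r hodd
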